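/- arXiv:1308.6134 — 3 statements merged into one kernel-verified Lean document; each statement's English description precedes it below -/
import Mathlib

section
/- Let A = [[1, 1], [−1, 1]] and Ã = I₂ (the 2×2 identity). Then for every r > 0, r^A (r^A)ᵀ = r^{Ã} (r^{Ã})ᵀ = r² • I₂, even though A ≠ Ã and the eigenvalues 1±i of A differ from the eigenvalue 1 of Ã. -/
open Matrix
open scoped Matrix.Norms.L2Operator

noncomputable def mpow {n : Type*} [Fintype n] [DecidableEq n] (r : ℝ)
    (A : Matrix n n ℝ) : Matrix n n ℝ :=
  NormedSpace.exp (Real.log r • A)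

lemma exp_smul_one' {n : Type*} [Fintype n] [DecidableEq n] (c : ℝ) :
    NormedSpace.exp (c • (1 : Matrix n n ℝ)) = Real.exp c • 1 := by
  have h1 : c • (1 : Matrix n n ℝ) = diagonal (fun _ => c) := by
    rw [smul_eq_diagonal_mul]; simp
  have h2 : Real.exp c • (1 : Matrix n n ℝ) = diagonal (fun _ => Real.exp c) := by
    rw [smul_eq_diagonal_mul]; simp
  rw [h1, h2, Matrix.exp_diagonal, Pi.exp_def, ← Real.exp_eq_exp_ℝ]

/-- The matrices `A = [[1,1],[-1,1]]` and `Ã = I₂` give the same quadratic form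
`r^A (r^A)ᵀ = r² • I₂`, although `A ≠ Ã` and their eigenvalues differ. -/
theorem mpow_nonuniqueness_example :
    (∀ r : ℝ, 0 < r →
        mpow r (Matrix.of ![![(1 : ℝ), 1], ![-1, 1]]) *
            (mpow r (Matrix.of ![![(1 : ℝ), 1], ![-1, 1]]))ᵀ =
          r ^ 2 • (1 : Matrix (Fin 2) (Fin 2) ℝ) ∧
        mpow r (1 : Matrix (Fin 2) (Fin 2) ℝ) *
            (mpow r (1 : Matrix (Fin 2) (Fin 2) ℝ))ᵀ =
          r ^ 2 • (1 : Matrix (Fin 2) (Fin 2) ℝ)) ∧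
      Matrix.of ![![(1 : ℝ), 1], ![-1, 1]] ≠ (1 : Matrix (Fin 2) (Fin 2) ℝ) ∧
      spectrum ℂ ((Matrix.of ![![(1 : ℝ), 1], ![-1, 1]]).map (algebraMap ℝ ℂ)) ≠
        spectrum ℂ ((1 : Matrix (Fin 2) (Fin 2) ℝ).map (algebraMap ℝ ℂ)) := by
  set A : Matrix (Fin 2) (Fin 2) ℝ := Matrix.of ![![(1 : ℝ), 1], ![-1, 1]] with hA
  refine ⟨fun r hr => ?_, ?_, ?_⟩
  · set t := Real.log r with ht
    have hexp2 : Real.exp (2 * t) = r ^ 2 := by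
      rw [two_mul, Real.exp_add, ht, Real.exp_log hr, sq]
    have hAT : Aᵀ = Matrix.of ![![(1 : ℝ), -1], ![1, 1]] := by
      rw [hA]; ext i j; fin_cases i <;> fin_cases j <;> rfl
    constructor
    · have hcomm : Commute (t • A) (t • Aᵀ) := by
        apply Commute.smul_left; apply Commute.smul_right
        show A * Aᵀ = Aᵀ * A
        have h1 : A * Aᵀ = (2 : ℝ) • 1 := by
          rw [hA, hAT]
          ext i j
          fin_cases i <;> fin_cases j <;>
            simp [Matrix.mul_apply, Fin.sum_univ_two, Matrix.one_apply,
              Matrix.transpose_apply] <;> norm_num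
        have h2 : Aᵀ * A = (2 : ℝ) • 1 := by
          rw [hA, hAT]
          ext i j
          fin_cases i <;> fin_cases j <;>
            simp [Matrix.mul_apply, Fin.sum_univ_two, Matrix.one_apply,
              Matrix.transpose_apply] <;> norm_num
        rw [h1, h2]
      have hsum : t • A + t • Aᵀ = (2 * t) • (1 : Matrix (Fin 2) (Fin 2) ℝ) := by
        rw [hA, hAT]
        ext i j
        fin_cases i <;> fin_cases j <;>
          simp [Matrix.one_apply, Matrix.transpose_apply] <;> ring
      rw [mpow, ← ht, ← Matrix.exp_transpose, Matrix.transpose_smul,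
        ← Matrix.exp_add_of_commute _ _ hcomm, hsum, exp_smul_one', hexp2]
    · rw [mpow, ← ht, exp_smul_one', Matrix.transpose_smul, Matrix.transpose_one,
        smul_mul_smul_comm, one_mul, ← Real.exp_add, ← two_mul, hexp2]
  · intro h
    have := congrFun (congrFun h 1) 0
    rw [hA] at this
    simp [Matrix.one_apply] at this
  · intro h
    have hmem : (1 + Complex.I) ∈ spectrum ℂ (A.map (algebraMap ℝ ℂ)) := by
      rw [spectrum.mem_iff]
      intro hu
      rw [Matrix.isUnit_iff_isUnit_det] at hu
      have hdet : ((algebraMap ℂ (Matrix (Fin 2) (Fin 2) ℂ)) (1 + Complex.I)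
          - A.map (algebraMap ℝ ℂ)).det = 0 := by
        rw [Matrix.det_fin_two]
        simp [hA, Matrix.algebraMap_eq_diagonal, Matrix.one_apply]
      rw [hdet] at hu
      exact hu.ne_zero rfl
    have hnmem : (1 + Complex.I) ∉ spectrum ℂ ((1 : Matrix (Fin 2) (Fin 2) ℝ).map (algebraMap ℝ ℂ)) := by
      rw [spectrum.notMem_iff, Matrix.isUnit_iff_isUnit_det]
      have hd : ((algebraMap ℂ (Matrix (Fin 2) (Fin 2) ℂ)) (1 + Complex.I)
          - (1 : Matrix (Fin 2) (Fin 2) ℝ).map (algebraMap ℝ ℂ)).det = Complex.I * Complex.I := by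
        rw [Matrix.det_fin_two]
        simp [Matrix.algebraMap_eq_diagonal, Matrix.one_apply]
      rw [hd, Complex.I_mul_I]
      exact (isUnit_one.neg)
    rw [h] at hmem
    exact hnmem hmem
end

section
/- Fix T > 0 and matrices A, Ã ∈ ℝ^{d×d} and Σ ∈ ℝ^{d×m}, Σ̃ ∈ ℝ^{d×m̃}. Suppose that the covariance functions U(t) = ∫₀ᵗ ((T−t)/(T−s))^A ΣΣᵀ ((T−t)/(T−s))^{Aᵀ} ds and V(t) = ∫₀ᵗ ((T−t)/(T−s))^{Ã} Σ̃Σ̃ᵀ ((T−t)/(T−s))^{Ãᵀ} ds coincide for all t ∈ [0,T). Then ΣΣᵀ = Σ̃Σ̃ᵀ and (A−Ã)U(t) = −U(t)(A−Ã)ᵀ for all t ∈ [0,T). -/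
open Matrix
open scoped Matrix.Norms.L2Operator

section Aux

open intervalIntegral Set

variable {𝔸 : Type*} [NormedRing 𝔸] [NormedAlgebra ℝ 𝔸] [CompleteSpace 𝔸]

lemma covaux_contOn (T : ℝ) (A A' C : 𝔸) :
    ContinuousOn (fun s => NormedSpace.exp ((-(Real.log (T - s))) • A) * C *
      NormedSpace.exp ((-(Real.log (T - s))) • A')) (Set.Iio T) := by
  letI : NormedAlgebra ℚ 𝔸 := .restrictScalars ℚ ℝ 𝔸
  have hlog : ContinuousOn (fun s => Real.log (T - s)) (Set.Iio T) := by
    intro s hs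
    exact ((Real.continuousAt_log (sub_ne_zero.2 (ne_of_gt hs))).comp
      ((continuous_const.sub continuous_id).continuousAt)).continuousWithinAt
  exact ((NormedSpace.exp_continuous.comp_continuousOn
      (hlog.neg.smul continuousOn_const)).mul continuousOn_const).mul
    (NormedSpace.exp_continuous.comp_continuousOn (hlog.neg.smul continuousOn_const))

lemma covaux_integrable (T : ℝ) (hT : 0 < T) (A A' C : 𝔸) {u : ℝ} (hu : u < T) :
    IntervalIntegrable (fun s => NormedSpace.exp ((-(Real.log (T - s))) • A) * C *
      NormedSpace.exp ((-(Real.log (T - s))) • A')) MeasureTheory.volume 0 u := by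
  apply ((covaux_contOn T A A' C).mono ?_).intervalIntegrable
  intro s hs
  rcases Set.mem_uIcc.mp hs with ⟨h1, h2⟩ | ⟨h1, h2⟩ <;> simp only [Set.mem_Iio] <;> linarith

lemma covaux_eq (T : ℝ) (hT : 0 < T) (A A' C : 𝔸) {u : ℝ} (hu : u < T) :
    (∫ s in (0:ℝ)..u, NormedSpace.exp (Real.log ((T - u) / (T - s)) • A) * C *
        NormedSpace.exp (Real.log ((T - u) / (T - s)) • A')) =
      NormedSpace.exp (Real.log (T - u) • A) *
        (∫ s in (0:ℝ)..u, NormedSpace.exp ((-(Real.log (T - s))) • A) * C *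
          NormedSpace.exp ((-(Real.log (T - s))) • A')) *
        NormedSpace.exp (Real.log (T - u) • A') := by
  letI : NormedAlgebra ℚ 𝔸 := .restrictScalars ℚ ℝ 𝔸
  set g : ℝ → 𝔸 := fun s => NormedSpace.exp ((-(Real.log (T - s))) • A) * C *
      NormedSpace.exp ((-(Real.log (T - s))) • A') with hg
  set L : 𝔸 →L[ℝ] 𝔸 := ContinuousLinearMap.mulLeftRight ℝ 𝔸
      (NormedSpace.exp (Real.log (T - u) • A)) (NormedSpace.exp (Real.log (T - u) • A'))
      with hL
  have key : ∀ s ∈ Set.uIcc (0:ℝ) u,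
      NormedSpace.exp (Real.log ((T - u) / (T - s)) • A) * C *
        NormedSpace.exp (Real.log ((T - u) / (T - s)) • A') = L (g s) := by
    intro s hs
    have hTs : 0 < T - s := by
      rcases Set.mem_uIcc.mp hs with ⟨h1, h2⟩ | ⟨h1, h2⟩ <;> linarith
    have hTu : 0 < T - u := by linarith
    have hlog : Real.log ((T - u) / (T - s)) = Real.log (T - u) + -(Real.log (T - s)) := by
      rw [Real.log_div hTu.ne' hTs.ne']; ring
    have hA : NormedSpace.exp (Real.log ((T - u) / (T - s)) • A) =
        NormedSpace.exp (Real.log (T - u) • A) *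
          NormedSpace.exp ((-(Real.log (T - s))) • A) := by
      rw [hlog, add_smul]
      exact NormedSpace.exp_add_of_commute (((Commute.refl A).smul_right _).smul_left _)
    have hA' : NormedSpace.exp (Real.log ((T - u) / (T - s)) • A') =
        NormedSpace.exp ((-(Real.log (T - s))) • A') *
          NormedSpace.exp (Real.log (T - u) • A') := by
      rw [hlog, add_comm, add_smul]
      exact NormedSpace.exp_add_of_commute (((Commute.refl A').smul_right _).smul_left _)
    rw [hA, hA', hL]
    simp only [ContinuousLinearMap.mulLeftRight_apply, hg]
    ring_nf
    simp [mul_assoc]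
  calc (∫ s in (0:ℝ)..u, NormedSpace.exp (Real.log ((T - u) / (T - s)) • A) * C *
        NormedSpace.exp (Real.log ((T - u) / (T - s)) • A'))
      = ∫ s in (0:ℝ)..u, L (g s) := intervalIntegral.integral_congr key
    _ = L (∫ s in (0:ℝ)..u, g s) :=
        ContinuousLinearMap.intervalIntegral_comp_comm L (covaux_integrable T hT A A' C hu)
    _ = _ := by rw [hL]; simp [ContinuousLinearMap.mulLeftRight_apply]

lemma covaux_hasDerivAt (T : ℝ) (hT : 0 < T) (A A' C : 𝔸) {t : ℝ} (ht : t < T) :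
    HasDerivAt (fun u => ∫ s in (0:ℝ)..u,
        NormedSpace.exp (Real.log ((T - u) / (T - s)) • A) * C *
          NormedSpace.exp (Real.log ((T - u) / (T - s)) • A'))
      (C - (T - t)⁻¹ • (A * (∫ s in (0:ℝ)..t,
          NormedSpace.exp (Real.log ((T - t) / (T - s)) • A) * C *
            NormedSpace.exp (Real.log ((T - t) / (T - s)) • A')) +
        (∫ s in (0:ℝ)..t,
          NormedSpace.exp (Real.log ((T - t) / (T - s)) • A) * C *
            NormedSpace.exp (Real.log ((T - t) / (T - s)) • A')) * A')) t := by
  have hTt : 0 < T - t := by linarith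
  letI : NormedAlgebra ℚ 𝔸 := .restrictScalars ℚ ℝ 𝔸
  set c : ℝ → ℝ := fun u => Real.log (T - u) with hc
  set g : ℝ → 𝔸 := fun s => NormedSpace.exp ((-(c s)) • A) * C *
      NormedSpace.exp ((-(c s)) • A') with hgdef
  set E : ℝ → 𝔸 := fun u => NormedSpace.exp (c u • A) with hE
  set E2 : ℝ → 𝔸 := fun u => NormedSpace.exp (c u • A') with hE2
  set W : ℝ → 𝔸 := fun u => ∫ s in (0:ℝ)..u, g s with hW
  have hct : HasDerivAt c (-(T - t)⁻¹) t := by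
    have h1 : HasDerivAt (fun u : ℝ => T - u) (-1) t := (hasDerivAt_id t).const_sub T
    have := (Real.hasDerivAt_log hTt.ne').comp t h1
    rw [show -(T - t)⁻¹ = (T - t)⁻¹ * -1 by ring]; exact this
  have hEd : HasDerivAt E ((-(T - t)⁻¹) • (E t * A)) t := by
    have := (hasDerivAt_exp_smul_const (𝕂 := ℝ) A (c t)).scomp t hct
    exact this
  have hE2d : HasDerivAt E2 ((-(T - t)⁻¹) • (E2 t * A')) t := by
    have := (hasDerivAt_exp_smul_const (𝕂 := ℝ) A' (c t)).scomp t hct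
    exact this
  have hWd : HasDerivAt W (g t) t :=
    intervalIntegral.integral_hasDerivAt_right (covaux_integrable T hT A A' C ht)
      ((covaux_contOn T A A' C).stronglyMeasurableAtFilter isOpen_Iio t ht)
      ((covaux_contOn T A A' C).continuousAt (Iio_mem_nhds ht))
  have hGd : HasDerivAt (fun u => E u * W u * E2 u)
      (((-(T - t)⁻¹) • (E t * A) * W t + E t * g t) * E2 t +
        E t * W t * ((-(T - t)⁻¹) • (E2 t * A'))) t := (hEd.mul hWd).mul hE2d
  have hF : HasDerivAt (fun u => ∫ s in (0:ℝ)..u,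
        NormedSpace.exp (Real.log ((T - u) / (T - s)) • A) * C *
          NormedSpace.exp (Real.log ((T - u) / (T - s)) • A'))
      (((-(T - t)⁻¹) • (E t * A) * W t + E t * g t) * E2 t +
        E t * W t * ((-(T - t)⁻¹) • (E2 t * A'))) t := by
    apply hGd.congr_of_eventuallyEq
    filter_upwards [Iio_mem_nhds ht] with u hu
    exact covaux_eq T hT A A' C hu
  have hFt : (∫ s in (0:ℝ)..t,
      NormedSpace.exp (Real.log ((T - t) / (T - s)) • A) * C *
        NormedSpace.exp (Real.log ((T - t) / (T - s)) • A')) = E t * W t * E2 t :=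
    covaux_eq T hT A A' C ht
  rw [hFt]
  convert hF using 1
  have hcommA : A * E t = E t * A := (((Commute.refl A).smul_right (c t)).exp_right).eq
  have hmidA : E t * NormedSpace.exp ((-(c t)) • A) = 1 := by
    rw [hE]
    rw [← NormedSpace.exp_add_of_commute (((Commute.refl A).smul_right _).smul_left _)]
    simp [neg_smul]
  have hmidA' : NormedSpace.exp ((-(c t)) • A') * E2 t = 1 := by
    rw [hE2]
    rw [← NormedSpace.exp_add_of_commute (((Commute.refl A').smul_right _).smul_left _)]
    simp [neg_smul]
  have hmid : E t * g t * E2 t = C := by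
    calc E t * g t * E2 t
        = (E t * NormedSpace.exp ((-(c t)) • A)) * C *
            (NormedSpace.exp ((-(c t)) • A') * E2 t) := by
          simp only [hgdef, mul_assoc]
      _ = C := by rw [hmidA, hmidA']; simp
  have e1 : ((-(T - t)⁻¹) • (E t * A)) * W t * E2 t =
      -((T - t)⁻¹ • (A * (E t * W t * E2 t))) := by
    rw [← hcommA]
    simp [smul_mul_assoc, mul_assoc, neg_smul]
  have e3 : E t * W t * ((-(T - t)⁻¹) • (E2 t * A')) =
      -((T - t)⁻¹ • ((E t * W t * E2 t) * A')) := by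
    simp [mul_smul_comm, mul_assoc, neg_smul]
  calc C - (T - t)⁻¹ • (A * (E t * W t * E2 t) + E t * W t * E2 t * A')
      = -((T - t)⁻¹ • (A * (E t * W t * E2 t))) + C +
          -((T - t)⁻¹ • ((E t * W t * E2 t) * A')) := by
        rw [smul_add]; abel
    _ = (((-(T - t)⁻¹) • (E t * A) * W t + E t * g t) * E2 t +
        E t * W t * ((-(T - t)⁻¹) • (E2 t * A'))) := by
        rw [add_mul, e1, hmid, e3]

end Aux

/-- If two covariance functions of operator scaled Wiener bridges coincide on `[0, T)`, then
`Σ Σᵀ = Σ̃ Σ̃ᵀ` and `(A − Ã) U(t) = −U(t) (A − Ã)ᵀ` for all `t ∈ [0, T)`. -/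
theorem covariance_equality_consequences {d m m' : ℕ} (T : ℝ) (hT : 0 < T)
    (A B : Matrix (Fin d) (Fin d) ℝ)
    (S : Matrix (Fin d) (Fin m) ℝ) (S2 : Matrix (Fin d) (Fin m') ℝ)
    (U V : ℝ → Matrix (Fin d) (Fin d) ℝ)
    (hU : ∀ t ∈ Set.Ico (0 : ℝ) T,
      U t = ∫ s in (0 : ℝ)..t,
        mpow ((T - t) / (T - s)) A * (S * Sᵀ) * mpow ((T - t) / (T - s)) Aᵀ)
    (hV : ∀ t ∈ Set.Ico (0 : ℝ) T,
      V t = ∫ s in (0 : ℝ)..t,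
        mpow ((T - t) / (T - s)) B * (S2 * S2ᵀ) * mpow ((T - t) / (T - s)) Bᵀ)
    (hUV : ∀ t ∈ Set.Ico (0 : ℝ) T, U t = V t) :
    S * Sᵀ = S2 * S2ᵀ ∧
      ∀ t ∈ Set.Ico (0 : ℝ) T, (A - B) * U t = -(U t * (A - B)ᵀ) := by
  simp only [mpow] at hU hV
  have hIco : UniqueDiffOn ℝ (Set.Ico (0:ℝ) T) :=
    uniqueDiffOn_convex (convex_Ico 0 T)
      (by rw [interior_Ico]; exact Set.nonempty_Ioo.2 hT)
  have hUd : ∀ t ∈ Set.Ico (0:ℝ) T,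
      HasDerivWithinAt U (S * Sᵀ - (T - t)⁻¹ • (A * U t + U t * Aᵀ)) (Set.Ico 0 T) t := by
    intro t ht
    have h := (covaux_hasDerivAt T hT A Aᵀ (S * Sᵀ) ht.2).hasDerivWithinAt
      (s := Set.Ico (0:ℝ) T)
    rw [← hU t ht] at h
    exact h.congr (fun x hx => hU x hx) (hU t ht)
  have hVd : ∀ t ∈ Set.Ico (0:ℝ) T,
      HasDerivWithinAt V (S2 * S2ᵀ - (T - t)⁻¹ • (B * V t + V t * Bᵀ)) (Set.Ico 0 T) t := by
    intro t ht
    have h := (covaux_hasDerivAt T hT B Bᵀ (S2 * S2ᵀ) ht.2).hasDerivWithinAt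
      (s := Set.Ico (0:ℝ) T)
    rw [← hV t ht] at h
    exact h.congr (fun x hx => hV x hx) (hV t ht)
  have key : ∀ t ∈ Set.Ico (0:ℝ) T,
      S * Sᵀ - (T - t)⁻¹ • (A * U t + U t * Aᵀ) =
        S2 * S2ᵀ - (T - t)⁻¹ • (B * U t + U t * Bᵀ) := by
    intro t ht
    have h2 := (hVd t ht).congr (fun x hx => (hUV x hx)) (hUV t ht)
    rw [← hUV t ht] at h2
    exact UniqueDiffWithinAt.eq_deriv _ (hIco t ht) (hUd t ht) h2
  have hU0 : U 0 = 0 := by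
    have := hU 0 ⟨le_refl 0, hT⟩
    simpa using this
  have hC : S * Sᵀ = S2 * S2ᵀ := by
    have := key 0 ⟨le_refl 0, hT⟩
    simpa [hU0] using this
  refine ⟨hC, fun t ht => ?_⟩
  have h := key t ht
  rw [hC, sub_right_inj] at h
  have hne : (T - t) ≠ 0 := by have := ht.2; intro h0; linarith [sub_eq_zero.mp h0]
  have heq : A * U t + U t * Aᵀ = B * U t + U t * Bᵀ := by
    have := congrArg (fun X => (T - t) • X) h
    simpa [smul_smul, mul_inv_cancel₀ hne] using this
  rw [transpose_sub, sub_mul, mul_sub, neg_sub, sub_eq_sub_iff_add_eq_add, heq, add_comm]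
end

section
/- Let A ∈ ℝ^{d×d} be a normal matrix (A Aᵀ = Aᵀ A), let Ã := Aᵀ and Σ = Σ̃ := I_d. Then for every r > 0, r^A Σ Σᵀ r^{Aᵀ} = r^{Ã} Σ̃ Σ̃ᵀ r^{Ãᵀ}. Consequently the covariance functions U(t) = ∫₀ᵗ ((T−t)/(T−s))^A ((T−t)/(T−s))^{Aᵀ} ds and V(t) defined with Ã coincide for all t ∈ [0,T). -/
open Matrix
open scoped Matrix.Norms.L2Operator

lemma mpow_key {d : ℕ} (A : Matrix (Fin d) (Fin d) ℝ) (hA : A * Aᵀ = Aᵀ * A) (r : ℝ) :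
    mpow r A * (mpow r A)ᵀ = mpow r Aᵀ * (mpow r Aᵀ)ᵀ := by
  have hT : (mpow r A)ᵀ = mpow r Aᵀ := by
    simp [mpow, ← Matrix.exp_transpose, Matrix.transpose_smul]
  have hTT : (mpow r Aᵀ)ᵀ = mpow r A := by
    rw [← hT, Matrix.transpose_transpose]
  rw [hT, hTT]
  have hc : Commute (Real.log r • A) (Real.log r • Aᵀ) := by
    simpa [Commute, SemiconjBy, Matrix.smul_mul, Matrix.mul_smul, smul_smul] using
      congrArg (fun M => (Real.log r) • (Real.log r) • M) hA
  simpa [mpow, Commute, SemiconjBy] using (hc.exp : _)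

/-- For a normal matrix `A`, taking `Ã = Aᵀ` and `Σ = Σ̃ = I` yields the same quadratic form
`r^A (r^A)ᵀ = r^(Aᵀ) (r^(Aᵀ))ᵀ` and hence identical covariance functions on `[0, T)`. -/
theorem normal_matrix_nonuniqueness {d : ℕ} (T : ℝ) (hT : 0 < T)
    (A : Matrix (Fin d) (Fin d) ℝ) (hA : A * Aᵀ = Aᵀ * A) :
    (∀ r : ℝ, 0 < r →
        mpow r A * (1 : Matrix (Fin d) (Fin d) ℝ) * (mpow r A)ᵀ =
          mpow r Aᵀ * (1 : Matrix (Fin d) (Fin d) ℝ) * (mpow r Aᵀ)ᵀ) ∧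
      ∀ t ∈ Set.Ico (0 : ℝ) T,
        (∫ s in (0 : ℝ)..t,
            mpow ((T - t) / (T - s)) A * (mpow ((T - t) / (T - s)) A)ᵀ) =
          ∫ s in (0 : ℝ)..t,
            mpow ((T - t) / (T - s)) Aᵀ * (mpow ((T - t) / (T - s)) Aᵀ)ᵀ := by
  refine ⟨fun r _ => by simpa using mpow_key A hA r, fun t _ => ?_⟩
  simp only [mpow_key A hA]
end
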